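/- arXiv:2512.08335 — 3 statements merged into one kernel-verified Lean document; each statement's English description precedes it below -/
import Mathlib

section
/- Let α > 1/2 and 0 < β < α - 1/2 with β ≤ 1. There exists a constant C_{α,β} such that for all measurable functions g, f : 𝕋^{d-1} → 𝕋^1 and every trigonometric polynomial φ on 𝕋^d, ∫_{𝕋^{d-1}} |φ(g(k̂), k̂) - φ(f(k̂), k̂)|² dk̂ ≤ C_{α,β} · (sup_{k̂} |g(k̂) - f(k̂)|)^{2β} · ‖φ‖_α². -/
/-!
Group the modes of `φ` by their first frequency, `φ(x, ŷ) = ∑ₙ e^{inx} ψₙ(ŷ)`. Interpolating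
between `|e^{is} - e^{it}| ≤ |s - t|` and `≤ 2` gives
`|e^{ins} - e^{int}|² ≤ 4^{1-β} M^{2β} (1 + n²)^β` when `|s - t| ≤ M`, so Cauchy–Schwarz with the
weights `(1 + n²)^α` bounds `|φ(g ŷ, ŷ) - φ(f ŷ, ŷ)|²` pointwise by
`4^{1-β} M^{2β} ∑ₙ (1 + n²)^{β-α} · ∑ₙ (1 + n²)^α |ψₙ(ŷ)|²`. The first sum converges because
`2(α - β) > 1`; integrating the second over the box, Parseval in `ŷ` turns it into
`(2π)^{d} ∑ (1 + n²)^α |c(n, m)|²`, which is at most `(2π)^{d} ‖φ‖_α²`.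
-/

open scoped BigOperators

/-- A trigonometric polynomial on `𝕋^{d}` (split as `𝕋¹ × 𝕋^{d-1}`), given by finitely
supported Fourier coefficients `c`. -/
noncomputable def trigPoly {d : ℕ} (c : ℤ × (Fin d → ℤ) → ℂ) (x : ℝ) (y : Fin d → ℝ) : ℂ :=
  ∑ᶠ p : ℤ × (Fin d → ℤ),
    c p * Complex.exp (Complex.I * (((p.1 : ℝ) * x + ∑ i, (p.2 i : ℝ) * y i : ℝ) : ℂ))

open Complex MeasureTheory Real ComplexConjugate

lemma le_rpow_mul_rpow_of_le_of_le {a x y β : ℝ} (ha : 0 ≤ a) (hax : a ≤ x) (hay : a ≤ y)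
    (hβ0 : 0 ≤ β) (hβ1 : β ≤ 1) : a ≤ x ^ β * y ^ (1 - β) := calc
  a = a ^ β * a ^ (1 - β) := by rw [← rpow_add' ha (by norm_num), add_sub_cancel, rpow_one]
  _ ≤ x ^ β * y ^ (1 - β) := mul_le_mul (rpow_le_rpow ha hax hβ0)
      (rpow_le_rpow ha hay (by linarith)) (by positivity) (rpow_nonneg (ha.trans hax) _)

lemma norm_exp_I_mul_sub_exp_I_mul_sq_le (a b : ℝ) {β : ℝ} (hβ0 : 0 ≤ β) (hβ1 : β ≤ 1) :
    ‖exp (I * a) - exp (I * b)‖ ^ 2 ≤ ((a - b) ^ 2) ^ β * 4 ^ (1 - β) := by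
  have hnorm : ∀ t : ℝ, ‖exp (I * t)‖ = 1 := fun t => by
    rw [mul_comm]; exact norm_exp_ofReal_mul_I t
  have hlip : ‖exp (I * a) - exp (I * b)‖ ≤ |a - b| := calc
    ‖exp (I * a) - exp (I * b)‖ = ‖exp (I * ↑(a - b)) - 1‖ := by
      rw [show exp (I * a) - exp (I * b) = exp (I * b) * (exp (I * ↑(a - b)) - 1) by
        rw [mul_sub, ← Complex.exp_add, mul_one]; push_cast; ring_nf, norm_mul, hnorm, one_mul]
    _ ≤ |a - b| := Real.norm_exp_I_mul_ofReal_sub_one_le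
  have hbdd : ‖exp (I * a) - exp (I * b)‖ ≤ 2 := by
    linarith [norm_sub_le (exp (I * a)) (exp (I * b)), hnorm a, hnorm b]
  refine le_rpow_mul_rpow_of_le_of_le (by positivity) ?_ ?_ hβ0 hβ1
  · rw [← sq_abs (a - b)]; gcongr
  · nlinarith [norm_nonneg (exp (I * a) - exp (I * b))]

lemma summable_one_add_sq_rpow_neg {γ : ℝ} (hγ : 1 / 2 < γ) :
    Summable fun n : ℤ => (1 + (n : ℝ) ^ 2) ^ (-γ) := by
  refine (summable_abs_int_rpow (b := 2 * γ) (by linarith)).of_norm_bounded_eventually ?_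
  filter_upwards [Filter.eventually_cofinite_ne 0] with n hn
  have hn2 : (0 : ℝ) < (n : ℝ) ^ 2 := by positivity
  rw [norm_of_nonneg (by positivity), rpow_neg (abs_nonneg _), ← rpow_neg (by positivity)]
  calc (1 + (n : ℝ) ^ 2) ^ (-γ) ≤ ((n : ℝ) ^ 2) ^ (-γ) :=
        rpow_le_rpow_of_nonpos hn2 (by linarith) (by linarith)
    _ = |(n : ℝ)| ^ (-(2 * γ)) := by
        rw [← sq_abs, ← rpow_natCast, ← rpow_mul (abs_nonneg _)]; norm_num

def torusBox (d : ℕ) : Set (Fin d → ℝ) := Set.univ.pi fun _ => Set.Ioc (-π) π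

noncomputable def torusChar {d : ℕ} (m : Fin d → ℤ) (y : Fin d → ℝ) : ℂ :=
  exp (I * ((∑ i, (m i : ℝ) * y i : ℝ) : ℂ))

section torusChar

variable {d : ℕ}

@[fun_prop]
lemma continuous_torusChar (m : Fin d → ℤ) : Continuous (torusChar m) := by
  unfold torusChar; fun_prop

lemma torusChar_eq_prod (m : Fin d → ℤ) (y : Fin d → ℝ) :
    torusChar m y = ∏ i, exp (I * (((m i : ℝ) * y i : ℝ) : ℂ)) := by
  rw [torusChar, ← Complex.exp_sum, ofReal_sum, Finset.mul_sum]

lemma torusChar_mul_conj (m m' : Fin d → ℤ) (y : Fin d → ℝ) :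
    torusChar m y * conj (torusChar m' y) = torusChar (m - m') y := by
  simp only [torusChar, ← Complex.exp_conj, ← Complex.exp_add, map_mul, conj_I, conj_ofReal,
    Pi.sub_apply, Int.cast_sub, sub_mul, Finset.sum_sub_distrib]
  push_cast; ring_nf

lemma integral_Ioc_exp_I_mul_int (k : ℤ) :
    ∫ t in Set.Ioc (-π) π, exp (I * (((k : ℝ) * t : ℝ) : ℂ)) =
      if k = 0 then ((2 * π : ℝ) : ℂ) else 0 := by
  rw [← intervalIntegral.integral_of_le (by linarith [pi_pos])]
  split_ifs with hk
  · simp [hk]; ring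
  · have hc : I * k ≠ 0 := by simp [hk]
    simp only [ofReal_mul, ofReal_intCast, ← mul_assoc]
    rw [integral_exp_mul_complex hc, div_eq_zero_iff, sub_eq_zero]
    left
    rw [show I * k * ((-π : ℝ) : ℂ) = I * k * π - k * (2 * π * I) by push_cast; ring,
      Complex.exp_sub, Complex.exp_int_mul_two_pi_mul_I, div_one]

lemma integral_torusBox_torusChar (k : Fin d → ℤ) :
    ∫ y in torusBox d, torusChar k y = if k = 0 then ((2 * π : ℝ) : ℂ) ^ d else 0 := by
  simp_rw [torusChar_eq_prod, torusBox, volume_pi, Measure.restrict_pi_pi]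
  rw [integral_fintype_prod_eq_prod (f := fun i t => exp (I * (((k i : ℝ) * t : ℝ) : ℂ)))]
  simp_rw [integral_Ioc_exp_I_mul_int]
  split_ifs with hk
  · simp [hk]
  · obtain ⟨i, hi⟩ := Function.ne_iff.1 hk
    exact Finset.prod_eq_zero (Finset.mem_univ i) (if_neg hi)

lemma Continuous.integrableOn_torusBox {E : Type*} [NormedAddCommGroup E] {f : (Fin d → ℝ) → E}
    (hf : Continuous f) : IntegrableOn f (torusBox d) :=
  hf.integrableOn_Icc.mono_set <| (Set.pi_univ_Icc (fun _ => -π) fun _ => π) ▸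
    Set.pi_mono fun _ _ => Set.Ioc_subset_Icc_self

lemma integral_torusBox_norm_sq_sum (S : Finset (Fin d → ℤ)) (a : (Fin d → ℤ) → ℂ) :
    ∫ y in torusBox d, ‖∑ m ∈ S, a m * torusChar m y‖ ^ 2 = (2 * π) ^ d * ∑ m ∈ S, ‖a m‖ ^ 2 := by
  have hterm : ∀ m m', IntegrableOn (fun y => a m * conj (a m') * torusChar (m - m') y)
      (torusBox d) := fun m m' => (by fun_prop : Continuous _).integrableOn_torusBox
  refine ofReal_injective ?_
  calc ((∫ y in torusBox d, ‖∑ m ∈ S, a m * torusChar m y‖ ^ 2 : ℝ) : ℂ)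
      = ∫ y in torusBox d, ∑ m ∈ S, ∑ m' ∈ S, a m * conj (a m') * torusChar (m - m') y := by
        rw [← integral_complex_ofReal]
        refine integral_congr_ae (Filter.Eventually.of_forall fun y => ?_)
        simp only [ofReal_pow, ← mul_conj', map_sum, map_mul, Finset.sum_mul_sum,
          ← torusChar_mul_conj]
        exact Finset.sum_congr rfl fun m _ => Finset.sum_congr rfl fun m' _ => by ring
    _ = ∑ m ∈ S, ∑ m' ∈ S, a m * conj (a m') * if m - m' = 0 then ((2 * π : ℝ) : ℂ) ^ d else 0 := by
        rw [integral_finsetSum _ fun m _ => integrable_finsetSum _ fun m' _ => hterm m m']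
        refine Finset.sum_congr rfl fun m _ => ?_
        rw [integral_finsetSum _ fun m' _ => hterm m m']
        simp_rw [integral_const_mul, integral_torusBox_torusChar]
    _ = (((2 * π) ^ d * ∑ m ∈ S, ‖a m‖ ^ 2 : ℝ) : ℂ) := by
        simp only [sub_eq_zero, mul_ite, mul_zero, Finset.sum_ite_eq, mul_conj', ofReal_mul,
          ofReal_pow, ofReal_sum, Finset.mul_sum]
        refine Finset.sum_congr rfl fun m hm => ?_
        rw [if_pos hm]; ring

end torusChar

lemma trigPoly_eq_sum_sum {d : ℕ} {c : ℤ × (Fin d → ℤ) → ℂ} {N : Finset ℤ}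
    {S : Finset (Fin d → ℤ)} (hc : Function.support c ⊆ ↑(N ×ˢ S)) (x : ℝ) (y : Fin d → ℝ) :
    trigPoly c x y = ∑ n ∈ N, exp (I * (((n : ℝ) * x : ℝ) : ℂ)) *
      ∑ m ∈ S, c (n, m) * torusChar m y := by
  rw [trigPoly, finsum_eq_sum_of_support_subset _ ((Function.support_mul_subset_left _ _).trans hc),
    Finset.sum_product]
  refine Finset.sum_congr rfl fun n _ => ?_
  rw [Finset.mul_sum]
  refine Finset.sum_congr rfl fun m _ => ?_
  rw [torusChar, mul_left_comm, ← Complex.exp_add, ← mul_add, ← ofReal_add]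

lemma norm_exp_I_mul_int_sub_sq_le {a b M β : ℝ} (hab : |a - b| ≤ M) (hβ0 : 0 ≤ β)
    (hβ1 : β ≤ 1) (n : ℤ) :
    ‖exp (I * (((n : ℝ) * a : ℝ) : ℂ)) - exp (I * (((n : ℝ) * b : ℝ) : ℂ))‖ ^ 2 ≤
      4 ^ (1 - β) * M ^ (2 * β) * (1 + (n : ℝ) ^ 2) ^ β := by
  have hM : 0 ≤ M := (abs_nonneg _).trans hab
  have hsq : ((n : ℝ) * a - n * b) ^ 2 ≤ (1 + (n : ℝ) ^ 2) * M ^ 2 := by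
    rw [← mul_sub, mul_pow, ← sq_abs (a - b)]
    gcongr
    linarith
  calc _ ≤ (((n : ℝ) * a - n * b) ^ 2) ^ β * 4 ^ (1 - β) :=
        norm_exp_I_mul_sub_exp_I_mul_sq_le _ _ hβ0 hβ1
    _ ≤ ((1 + (n : ℝ) ^ 2) * M ^ 2) ^ β * 4 ^ (1 - β) := by gcongr
    _ = 4 ^ (1 - β) * M ^ (2 * β) * (1 + (n : ℝ) ^ 2) ^ β := by
        rw [mul_rpow (by positivity) (by positivity), rpow_mul hM, rpow_two]
        ring

lemma norm_sum_exp_I_mul_int_sub_mul_sq_le (N : Finset ℤ) (ψ : ℤ → ℂ) {a b M : ℝ}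
    (hab : |a - b| ≤ M) (α : ℝ) {β : ℝ} (hβ0 : 0 ≤ β) (hβ1 : β ≤ 1) :
    ‖∑ n ∈ N, (exp (I * (((n : ℝ) * a : ℝ) : ℂ)) - exp (I * (((n : ℝ) * b : ℝ) : ℂ))) * ψ n‖ ^ 2 ≤
      4 ^ (1 - β) * M ^ (2 * β) * (∑ n ∈ N, (1 + (n : ℝ) ^ 2) ^ (β - α)) *
        ∑ n ∈ N, (1 + (n : ℝ) ^ 2) ^ α * ‖ψ n‖ ^ 2 := by
  set Δ : ℤ → ℂ := fun n => exp (I * (((n : ℝ) * a : ℝ) : ℂ)) - exp (I * (((n : ℝ) * b : ℝ) : ℂ))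
  have hM : 0 ≤ M := (abs_nonneg _).trans hab
  have htri : ‖∑ n ∈ N, Δ n * ψ n‖ ≤ ∑ n ∈ N, ‖Δ n‖ * ‖ψ n‖ :=
    (norm_sum_le _ _).trans_eq (by simp only [norm_mul])
  calc ‖∑ n ∈ N, Δ n * ψ n‖ ^ 2 ≤ (∑ n ∈ N, ‖Δ n‖ * ‖ψ n‖) ^ 2 := by gcongr
    _ ≤ (∑ n ∈ N, 4 ^ (1 - β) * M ^ (2 * β) * (1 + (n : ℝ) ^ 2) ^ (β - α)) *
          ∑ n ∈ N, (1 + (n : ℝ) ^ 2) ^ α * ‖ψ n‖ ^ 2 := by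
        refine Finset.sum_sq_le_sum_mul_sum_of_sq_le_mul _ (fun n _ => by positivity)
          (fun n _ => by positivity) fun n _ => ?_
        have hpos : (0 : ℝ) < 1 + (n : ℝ) ^ 2 := by positivity
        calc (‖Δ n‖ * ‖ψ n‖) ^ 2 = ‖Δ n‖ ^ 2 * ‖ψ n‖ ^ 2 := mul_pow _ _ _
          _ ≤ 4 ^ (1 - β) * M ^ (2 * β) * (1 + (n : ℝ) ^ 2) ^ β * ‖ψ n‖ ^ 2 := by
              gcongr; exact norm_exp_I_mul_int_sub_sq_le hab hβ0 hβ1 n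
          _ = _ := by
              rw [rpow_sub hpos]
              field_simp
    _ = _ := by rw [← Finset.mul_sum]

lemma integral_torusBox_sum_mul_norm_sq {d : ℕ} (N : Finset ℤ) (S : Finset (Fin d → ℤ))
    (w : ℤ → ℝ) (c : ℤ × (Fin d → ℤ) → ℂ) :
    ∫ y in torusBox d, ∑ n ∈ N, w n * ‖∑ m ∈ S, c (n, m) * torusChar m y‖ ^ 2 =
      (2 * π) ^ d * ∑ n ∈ N, ∑ m ∈ S, w n * ‖c (n, m)‖ ^ 2 := by
  rw [integral_finsetSum _ fun n _ => (by fun_prop : Continuous _).integrableOn_torusBox,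
    Finset.mul_sum]
  refine Finset.sum_congr rfl fun n _ => ?_
  rw [integral_const_mul, integral_torusBox_norm_sq_sum, ← Finset.mul_sum]
  ring

lemma integral_torusBox_norm_trigPoly_sub_sq_le {d : ℕ} {c : ℤ × (Fin d → ℤ) → ℂ}
    {N : Finset ℤ} {S : Finset (Fin d → ℤ)} (hc : Function.support c ⊆ ↑(N ×ˢ S))
    {g f : (Fin d → ℝ) → ℝ} {M : ℝ} (hM : ∀ y, |g y - f y| ≤ M) (α : ℝ) {β : ℝ}
    (hβ0 : 0 ≤ β) (hβ1 : β ≤ 1) :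
    ∫ y in torusBox d, ‖trigPoly c (g y) y - trigPoly c (f y) y‖ ^ 2 ≤
      4 ^ (1 - β) * M ^ (2 * β) * (∑ n ∈ N, (1 + (n : ℝ) ^ 2) ^ (β - α)) * (2 * π) ^ d *
        ∑ n ∈ N, ∑ m ∈ S, (1 + (n : ℝ) ^ 2) ^ α * ‖c (n, m)‖ ^ 2 := by
  set ψ : ℤ → (Fin d → ℝ) → ℂ := fun n y => ∑ m ∈ S, c (n, m) * torusChar m y
  set A := 4 ^ (1 - β) * M ^ (2 * β) * ∑ n ∈ N, (1 + (n : ℝ) ^ 2) ^ (β - α)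
  have hpointwise : ∀ y, ‖trigPoly c (g y) y - trigPoly c (f y) y‖ ^ 2 ≤
      A * ∑ n ∈ N, (1 + (n : ℝ) ^ 2) ^ α * ‖ψ n y‖ ^ 2 := fun y => by
    simp only [trigPoly_eq_sum_sum hc, ← Finset.sum_sub_distrib, ← sub_mul]
    exact norm_sum_exp_I_mul_int_sub_mul_sq_le N (ψ · y) (hM y) α hβ0 hβ1
  calc _ ≤ ∫ y in torusBox d, A * ∑ n ∈ N, (1 + (n : ℝ) ^ 2) ^ α * ‖ψ n y‖ ^ 2 :=
        integral_mono_of_nonneg (Filter.Eventually.of_forall fun _ => by positivity)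
          (by fun_prop : Continuous _).integrableOn_torusBox
          (Filter.Eventually.of_forall hpointwise)
    _ = _ := by rw [integral_const_mul, integral_torusBox_sum_mul_norm_sq]; ring

theorem stmt_2_general (d : ℕ) (α β : ℝ) (hβ0 : 0 < β) (hβ : β < α - 1 / 2)
    (hβ1 : β ≤ 1) :
    ∃ C : ℝ, 0 < C ∧
      ∀ (c : ℤ × (Fin d → ℤ) → ℂ), (Function.support c).Finite →
        ∀ g f : (Fin d → ℝ) → ℝ, Measurable g → Measurable f →
          ∀ M : ℝ, (∀ y, |g y - f y| ≤ M) →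
            (∫ y in Set.pi Set.univ fun _ : Fin d => Set.Ioc (-Real.pi) Real.pi,
                ‖trigPoly c (g y) y - trigPoly c (f y) y‖ ^ 2) ≤
              C * M ^ (2 * β) * ∑ᶠ p : ℤ × (Fin d → ℤ),
                (1 + (p.1 : ℝ) ^ 2 + ∑ i, (p.2 i : ℝ) ^ 2) ^ α * ‖c p‖ ^ 2 := by
  have hK : Summable fun n : ℤ => (1 + (n : ℝ) ^ 2) ^ (β - α) := by
    simpa using summable_one_add_sq_rpow_neg (γ := α - β) (by linarith)
  set K := ∑' n : ℤ, (1 + (n : ℝ) ^ 2) ^ (β - α)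
  have hKpos : 0 < K := hK.tsum_pos (fun _ => by positivity) 0 (by positivity)
  refine ⟨4 ^ (1 - β) * K * (2 * π) ^ d, by positivity, fun c hc g f _ _ M hM => ?_⟩
  have hM0 : 0 ≤ M := (abs_nonneg _).trans (hM 0)
  set T := hc.toFinset
  have hT : Function.support c ⊆ ↑(T.image Prod.fst ×ˢ T.image Prod.snd) := fun p hp =>
    Finset.mem_product.2 ⟨Finset.mem_image_of_mem _ (hc.mem_toFinset.2 hp),
      Finset.mem_image_of_mem _ (hc.mem_toFinset.2 hp)⟩
  have hweight : ∀ p : ℤ × (Fin d → ℤ),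
      (1 + (p.1 : ℝ) ^ 2) ^ α ≤ (1 + (p.1 : ℝ) ^ 2 + ∑ i, (p.2 i : ℝ) ^ 2) ^ α := fun p =>
    rpow_le_rpow (by positivity) (le_add_of_nonneg_right (by positivity)) (by linarith)
  calc _ ≤ _ := integral_torusBox_norm_trigPoly_sub_sq_le hT hM α hβ0.le hβ1
    _ ≤ 4 ^ (1 - β) * M ^ (2 * β) * K * (2 * π) ^ d * ∑ p ∈ T.image Prod.fst ×ˢ T.image Prod.snd,
          (1 + (p.1 : ℝ) ^ 2 + ∑ i, (p.2 i : ℝ) ^ 2) ^ α * ‖c p‖ ^ 2 := by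
        rw [Finset.sum_product]
        gcongr 4 ^ (1 - β) * M ^ (2 * β) * ?_ * (2 * π) ^ d * ∑ n ∈ _, ∑ m ∈ _, ?_ * _
        · exact hK.sum_le_tsum _ fun _ _ => by positivity
        · exact hweight (_, _)
    _ = _ := by
        rw [finsum_eq_sum_of_support_subset _ (Function.support_subset_iff'.2 fun p hp => by
          simp [Function.notMem_support.1 (mt (@hT p) hp)])]
        ring

/-- Hölder continuity of traces: for `α > 1/2`, `0 < β < α - 1/2`, `β ≤ 1` there is a constant
`C` such that for any measurable `g, f : 𝕋^{d-1} → 𝕋¹` with `sup |g - f| ≤ M`,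
`∫ |φ(g(k̂),k̂) - φ(f(k̂),k̂)|² dk̂ ≤ C M^{2β} ‖φ‖_α²` for every trigonometric polynomial `φ`. -/
theorem stmt_2 (d : ℕ) (α β : ℝ) (hα : 1 / 2 < α) (hβ0 : 0 < β) (hβ : β < α - 1 / 2)
    (hβ1 : β ≤ 1) :
    ∃ C : ℝ, 0 < C ∧
      ∀ (c : ℤ × (Fin d → ℤ) → ℂ), (Function.support c).Finite →
        ∀ g f : (Fin d → ℝ) → ℝ, Measurable g → Measurable f →
          ∀ M : ℝ, (∀ y, |g y - f y| ≤ M) →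
            (∫ y in Set.pi Set.univ fun _ : Fin d => Set.Ioc (-Real.pi) Real.pi,
                ‖trigPoly c (g y) y - trigPoly c (f y) y‖ ^ 2) ≤
              C * M ^ (2 * β) * ∑ᶠ p : ℤ × (Fin d → ℤ),
                (1 + (p.1 : ℝ) ^ 2 + ∑ i, (p.2 i : ℝ) ^ 2) ^ α * ‖c p‖ ^ 2 :=
  stmt_2_general d α β hβ0 hβ hβ1
end

section
/- Fix 0 ≤ μ < 1 and ω ∈ 𝕊². The function f_ω : 𝕊² → ℝ defined by f_ω(θ) = ⟨θ, ω⟩ / (μ θ₁ + 1) is a Morse function, i.e., at every critical point of f_ω on the sphere 𝕊², the Hessian (computed in any local chart) is non-degenerate. -/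
open scoped RealInnerProductSpace

set_option maxHeartbeats 1600000 in
/-- The function `f_ω(θ) = ⟨θ,ω⟩/(μθ₁+1)` on the sphere `𝕊²` is a Morse function: at every
critical point, the Hessian computed in any local chart is non-degenerate. -/
theorem stmt_9 (μ : ℝ) (hμ0 : 0 ≤ μ) (hμ1 : μ < 1)
    (ω : EuclideanSpace ℝ (Fin 3)) (hω : ‖ω‖ = 1)
    (θ : EuclideanSpace ℝ (Fin 3)) (hθ : ‖θ‖ = 1)
    (ψ : EuclideanSpace ℝ (Fin 2) → EuclideanSpace ℝ (Fin 3))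
    (hψ : ContDiff ℝ (⊤ : ℕ∞) ψ) (hψ0 : ψ 0 = θ) (hsphere : ∀ x, ‖ψ x‖ = 1)
    (hinj : Function.Injective (fderiv ℝ ψ 0))
    (hcrit : fderiv ℝ (fun x => ⟪ψ x, ω⟫ / (μ * (ψ x 0) + 1)) 0 = 0) :
    ∀ v : EuclideanSpace ℝ (Fin 2),
      (∀ w : EuclideanSpace ℝ (Fin 2),
        iteratedFDeriv ℝ 2 (fun x => ⟪ψ x, ω⟫ / (μ * (ψ x 0) + 1)) 0 ![v, w] = 0) →
      v = 0 := by
  intro v hv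
  set F : EuclideanSpace ℝ (Fin 2) → ℝ := fun x => ⟪ψ x, ω⟫ / (μ * (ψ x 0) + 1) with hFdef
  set D := fderiv ℝ ψ 0 with hDdef
  have hψd : Differentiable ℝ ψ := hψ.differentiable (by simp)
  -- denominator positive
  have hpos : ∀ x : EuclideanSpace ℝ (Fin 2), 0 < μ * ψ x 0 + 1 := by
    intro x
    have h1 : |ψ x 0| ≤ 1 := by
      have := abs_real_inner_le_norm (EuclideanSpace.single (0 : Fin 3) (1:ℝ)) (ψ x)
      simpa [EuclideanSpace.inner_single_left, hsphere x, EuclideanSpace.norm_single] using this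
    have := abs_le.1 h1
    nlinarith
  have hF : ContDiff ℝ (⊤ : ℕ∞) F := by
    apply (hψ.inner ℝ contDiff_const).div
    · exact (contDiff_const.mul ((EuclideanSpace.proj (0 : Fin 3)).contDiff.comp hψ)).add
        contDiff_const
    · exact fun x => (hpos x).ne'
  have hFd : Differentiable ℝ F := hF.differentiable (by simp)
  -- line and curve derivatives
  have hline : ∀ (u : EuclideanSpace ℝ (Fin 2)) (t : ℝ),
      HasDerivAt (fun s : ℝ => s • u) u t := by
    intro u t
    simpa using (hasDerivAt_id t).smul_const u
  have hc : ∀ (u : EuclideanSpace ℝ (Fin 2)) (t : ℝ),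
      HasDerivAt (fun s : ℝ => ψ (s • u)) (fderiv ℝ ψ (t • u) u) t := by
    intro u t
    exact (hψd (t • u)).hasFDerivAt.comp_hasDerivAt t (hline u t)
  have hg : ∀ (u : EuclideanSpace ℝ (Fin 2)) (t : ℝ),
      HasDerivAt (fun s : ℝ => ⟪ψ (s • u), ω⟫) ⟪fderiv ℝ ψ (t • u) u, ω⟫ t := by
    intro u t
    simpa using (hc u t).inner ℝ (hasDerivAt_const t ω)
  have hproj : ∀ (u : EuclideanSpace ℝ (Fin 2)) (t : ℝ),
      HasDerivAt (fun s : ℝ => ψ (s • u) 0) ((fderiv ℝ ψ (t • u) u) 0) t := by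
    intro u t
    exact (EuclideanSpace.proj (0 : Fin 3)).hasFDerivAt.comp_hasDerivAt t (hc u t)
  have hh : ∀ (u : EuclideanSpace ℝ (Fin 2)) (t : ℝ),
      HasDerivAt (fun s : ℝ => μ * ψ (s • u) 0 + 1) (μ * (fderiv ℝ ψ (t • u) u) 0) t := by
    intro u t
    simpa using (((hproj u t).const_mul μ).add_const 1)
  have hφ : ∀ (u : EuclideanSpace ℝ (Fin 2)) (t : ℝ),
      HasDerivAt (fun s : ℝ => F (s • u))
        ((⟪fderiv ℝ ψ (t • u) u, ω⟫ * (μ * ψ (t • u) 0 + 1)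
          - ⟪ψ (t • u), ω⟫ * (μ * (fderiv ℝ ψ (t • u) u) 0)) / (μ * ψ (t • u) 0 + 1) ^ 2) t := by
    intro u t
    exact (hg u t).div (hh u t) (hpos _).ne'
  -- criticality in every direction
  have hkey1 : ∀ u : EuclideanSpace ℝ (Fin 2),
      ⟪D u, ω⟫ * (μ * θ 0 + 1) - ⟪θ, ω⟫ * (μ * (D u) 0) = 0 := by
    intro u
    have h0 : HasDerivAt (fun s : ℝ => F (s • u)) 0 0 := by
      have h0' : HasFDerivAt F (fderiv ℝ F 0) ((0:ℝ) • u) := by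
        rw [zero_smul]; exact (hFd 0).hasFDerivAt
      have := h0'.comp_hasDerivAt 0 (hline u 0)
      rw [hFdef] at hcrit
      rw [hcrit] at this
      simp only [ContinuousLinearMap.zero_apply] at this; exact this
    have h1 := (hφ u 0)
    rw [zero_smul] at h1
    have h2 := h1.unique h0
    rw [hψ0, ← hDdef] at h2
    have hne : (μ * θ 0 + 1) ≠ 0 := by
      have := hpos 0; rw [hψ0] at this; exact this.ne'
    rcases div_eq_zero_iff.mp h2 with h3 | h3
    · exact h3
    · exact absurd (pow_eq_zero_iff (by norm_num)|>.mp h3) hne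
  -- tangency along curves
  have hcc : ∀ (u : EuclideanSpace ℝ (Fin 2)) (t : ℝ),
      ⟪fderiv ℝ ψ (t • u) u, ψ (t • u)⟫ = 0 := by
    intro u t
    have h1 : HasDerivAt (fun s : ℝ => ⟪ψ (s • u), ψ (s • u)⟫)
        (⟪ψ (t • u), fderiv ℝ ψ (t • u) u⟫ + ⟪fderiv ℝ ψ (t • u) u, ψ (t • u)⟫) t :=
      (hc u t).inner ℝ (hc u t)
    have h2 : (fun s : ℝ => ⟪ψ (s • u), ψ (s • u)⟫) = fun _ : ℝ => (1:ℝ) := by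
      funext s
      rw [real_inner_self_eq_norm_sq, hsphere]; norm_num
    rw [h2] at h1
    have h3 := h1.unique (hasDerivAt_const t 1)
    rw [real_inner_comm (ψ (t • u))] at h3
    rw [real_inner_comm]
    linarith [h3]
  have htan : ∀ u : EuclideanSpace ℝ (Fin 2), ⟪D u, θ⟫ = 0 := by
    intro u
    have := hcc u 0
    rwa [zero_smul, hψ0, ← hDdef] at this
  -- tangent space identification
  have hθne : θ ≠ 0 := by
    intro h; rw [h, norm_zero] at hθ; norm_num at hθ
  have hTfin : Module.finrank ℝ ((ℝ ∙ θ)ᗮ : Submodule ℝ (EuclideanSpace ℝ (Fin 3))) = 2 := by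
    have h1 := Submodule.finrank_add_finrank_orthogonal (K := (ℝ ∙ θ))
    rw [finrank_span_singleton hθne, finrank_euclideanSpace_fin] at h1
    omega
  have hRT : LinearMap.range ((D : EuclideanSpace ℝ (Fin 2) →L[ℝ] EuclideanSpace ℝ (Fin 3))
      : EuclideanSpace ℝ (Fin 2) →ₗ[ℝ] EuclideanSpace ℝ (Fin 3)) = (ℝ ∙ θ)ᗮ := by
    apply Submodule.eq_of_le_of_finrank_eq
    · rintro p ⟨u, rfl⟩
      rw [Submodule.mem_orthogonal_singleton_iff_inner_left]
      exact htan u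
    · rw [hTfin, LinearMap.finrank_range_of_inj]
      · exact finrank_euclideanSpace_fin
      · exact hinj
  -- decomposition of ω
  have hposθ : 0 < μ * θ 0 + 1 := by have := hpos 0; rwa [hψ0] at this
  have hzero : (μ * θ 0 + 1) • ω
      = (μ * ⟪θ, ω⟫) • EuclideanSpace.single (0:Fin 3) (1:ℝ) + ⟪θ, ω⟫ • θ := by
    set z : EuclideanSpace ℝ (Fin 3) := (μ * θ 0 + 1) • ω
      - (μ * ⟪θ, ω⟫) • EuclideanSpace.single (0:Fin 3) (1:ℝ) - ⟪θ, ω⟫ • θ with hzdef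
    have hzmem : z ∈ ((ℝ ∙ θ)ᗮ)ᗮ := by
      rw [Submodule.mem_orthogonal]
      intro p hp
      rw [← hRT] at hp
      obtain ⟨u, rfl⟩ := hp
      have hk := hkey1 u
      have ht := htan u
      simp only [ContinuousLinearMap.coe_coe]
      rw [hzdef, inner_sub_right, inner_sub_right, real_inner_smul_right,
        real_inner_smul_right, real_inner_smul_right, EuclideanSpace.inner_single_right, ht]
      simp only [conj_trivial, mul_one, one_mul, mul_zero, sub_zero]
      linear_combination hk
    rw [Submodule.orthogonal_orthogonal] at hzmem
    obtain ⟨r, hr⟩ := Submodule.mem_span_singleton.mp hzmem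
    have hz0 : ⟪z, θ⟫ = 0 := by
      simp only [hzdef, inner_sub_left, real_inner_smul_left,
        EuclideanSpace.inner_single_left, conj_trivial]
      have h1 : ⟪θ, θ⟫ = (1:ℝ) := by rw [real_inner_self_eq_norm_sq, hθ]; norm_num
      rw [real_inner_comm ω θ, h1]
      ring
    rw [← hr, real_inner_smul_left, real_inner_self_eq_norm_sq, hθ] at hz0
    have hr0 : r = 0 := by simpa using hz0
    rw [hr0, zero_smul] at hr
    have : z = 0 := hr.symm
    rw [hzdef, sub_sub, sub_eq_zero] at this
    exact this
  have hg0ne : ⟪θ, ω⟫ ≠ 0 := by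
    intro h
    rw [h] at hzero
    simp only [mul_zero, zero_smul, add_zero] at hzero
    rcases smul_eq_zero.mp hzero with h1 | h1
    · exact hposθ.ne' h1
    · rw [h1, norm_zero] at hω; norm_num at hω
  -- second derivative data
  have hψ' : ContDiff ℝ (⊤ : ℕ∞) (fderiv ℝ ψ) := hψ.fderiv_right (by simp)
  have hbd : DifferentiableAt ℝ (fun t : ℝ => fderiv ℝ ψ (t • v) v) 0 := by
    have h1 : Differentiable ℝ (fun t : ℝ => fderiv ℝ ψ (t • v)) :=
      (hψ'.differentiable (by simp)).comp (differentiable_id.smul_const v)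
    exact ((h1 0).clm_apply (differentiableAt_const v))
  set b : EuclideanSpace ℝ (Fin 3) := deriv (fun t : ℝ => fderiv ℝ ψ (t • v) v) 0 with hbdef
  have hb : HasDerivAt (fun t : ℝ => fderiv ℝ ψ (t • v) v) b 0 := hbd.hasDerivAt
  set a : EuclideanSpace ℝ (Fin 3) := D v with hadef
  have ha0 : fderiv ℝ ψ ((0:ℝ) • v) v = a := by rw [zero_smul, hadef, hDdef]
  -- inner relations for b
  have hbθ : ⟪b, θ⟫ = -⟪a, a⟫ := by
    have h1 : HasDerivAt (fun t : ℝ => ⟪fderiv ℝ ψ (t • v) v, ψ (t • v)⟫)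
        (⟪fderiv ℝ ψ ((0:ℝ) • v) v, fderiv ℝ ψ ((0:ℝ) • v) v⟫ + ⟪b, ψ ((0:ℝ) • v)⟫) 0 :=
      hb.inner ℝ (hc v 0)
    have h2 : (fun t : ℝ => ⟪fderiv ℝ ψ (t • v) v, ψ (t • v)⟫) = fun _ : ℝ => (0:ℝ) := by
      funext t; exact hcc v t
    rw [h2] at h1
    have h3 := h1.unique (hasDerivAt_const 0 0)
    rw [ha0, zero_smul, hψ0] at h3
    linarith
  have hgb : HasDerivAt (fun t : ℝ => ⟪fderiv ℝ ψ (t • v) v, ω⟫) ⟪b, ω⟫ 0 := by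
    simpa using hb.inner ℝ (hasDerivAt_const 0 ω)
  have hhb : HasDerivAt (fun t : ℝ => μ * (fderiv ℝ ψ (t • v) v) 0) (μ * b 0) 0 := by
    have h1 := (EuclideanSpace.proj (0 : Fin 3)).hasFDerivAt.comp_hasDerivAt 0 hb
    exact h1.const_mul μ
  -- numerator and denominator of the derivative in direction v
  have hN : HasDerivAt
      (fun t : ℝ => ⟪fderiv ℝ ψ (t • v) v, ω⟫ * (μ * ψ (t • v) 0 + 1)
        - ⟪ψ (t • v), ω⟫ * (μ * (fderiv ℝ ψ (t • v) v) 0))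
      ((⟪b, ω⟫ * (μ * ψ ((0:ℝ) • v) 0 + 1)
          + ⟪fderiv ℝ ψ ((0:ℝ) • v) v, ω⟫ * (μ * fderiv ℝ ψ ((0:ℝ) • v) v 0))
        - (⟪fderiv ℝ ψ ((0:ℝ) • v) v, ω⟫ * (μ * fderiv ℝ ψ ((0:ℝ) • v) v 0)
          + ⟪ψ ((0:ℝ) • v), ω⟫ * (μ * b 0))) 0 :=
    (hgb.mul (hh v 0)).sub ((hg v 0).mul hhb)
  have hDen : HasDerivAt (fun t : ℝ => (μ * ψ (t • v) 0 + 1) ^ 2)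
      (2 * (μ * ψ ((0:ℝ) • v) 0 + 1) ^ 1 * (μ * fderiv ℝ ψ ((0:ℝ) • v) v 0)) 0 :=
    (hh v 0).pow 2
  have hderiv1 : deriv (fun s : ℝ => F (s • v)) = fun t : ℝ =>
      (⟪fderiv ℝ ψ (t • v) v, ω⟫ * (μ * ψ (t • v) 0 + 1)
        - ⟪ψ (t • v), ω⟫ * (μ * (fderiv ℝ ψ (t • v) v) 0)) / (μ * ψ (t • v) 0 + 1) ^ 2 := by
    funext t; exact (hφ v t).deriv
  have hquot := hN.div hDen (pow_ne_zero 2 (hpos _).ne')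
  -- identify the second derivative along v with the iterated derivative
  clear_value F
  have hIter : (iteratedFDeriv ℝ 2 F 0) ![v, v] = deriv (deriv (fun s : ℝ => F (s • v))) 0 := by
    have hcomp : (fun s : ℝ => F (s • v)) = F ∘ (ContinuousLinearMap.toSpanSingleton ℝ v) := by
      funext s; simp [ContinuousLinearMap.toSpanSingleton_apply]
    have h1 := (ContinuousLinearMap.toSpanSingleton ℝ v).iteratedFDeriv_comp_right hF 0
      (i := 2) (by exact WithTop.coe_le_coe.mpr (le_top : (2:ℕ∞) ≤ ⊤))
    have h2 : deriv (deriv (fun s : ℝ => F (s • v))) 0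
        = iteratedDeriv 2 (fun s : ℝ => F (s • v)) 0 := by
      have e1 : iteratedDeriv 2 (fun s : ℝ => F (s • v)) = deriv (deriv (fun s : ℝ => F (s • v))) := by
        show iteratedDeriv (1+1) (fun s : ℝ => F (s • v)) = deriv (deriv (fun s : ℝ => F (s • v)))
        rw [iteratedDeriv_succ, iteratedDeriv_one]
      rw [e1]
    rw [h2, iteratedDeriv_eq_iteratedFDeriv, hcomp, h1,
      ContinuousMultilinearMap.compContinuousLinearMap_apply]
    have h3 : (ContinuousLinearMap.toSpanSingleton ℝ v) 0 = 0 := map_zero _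
    have h4 : (fun i : Fin 2 => (ContinuousLinearMap.toSpanSingleton ℝ v)
        ((fun _ : Fin 2 => (1:ℝ)) i)) = ![v, v] := by
      funext i
      fin_cases i <;> simp [ContinuousLinearMap.toSpanSingleton_apply]
    rw [h3, h4]
  -- evaluate the second derivative
  have hval := hquot.deriv
  simp only [Pi.div_def] at hval
  rw [← hderiv1] at hval
  rw [hval, zero_smul, hψ0, ← hDdef, ← hadef] at hIter
  have hzero2 : iteratedFDeriv ℝ 2 F 0 ![v, v] = 0 := hv v
  rw [hIter] at hzero2
  have hN0 : ⟪a, ω⟫ * (μ * θ 0 + 1) - ⟪θ, ω⟫ * (μ * a 0) = 0 := hkey1 v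
  have hbω : (μ * θ 0 + 1) * ⟪b, ω⟫ = μ * ⟪θ, ω⟫ * b 0 - ⟪θ, ω⟫ * ⟪a, a⟫ := by
    have h5 := congrArg (fun y : EuclideanSpace ℝ (Fin 3) => (⟪b, y⟫ : ℝ)) hzero
    simp only [inner_add_right, real_inner_smul_right,
      EuclideanSpace.inner_single_right, conj_trivial, mul_one] at h5
    rw [h5, hbθ]
    ring
  have hne : (μ * θ 0 + 1) ≠ 0 := hposθ.ne'
  have haa : ⟪a, a⟫ = (0:ℝ) := by
    have h6 : (⟪b, ω⟫ * (μ * θ 0 + 1) + ⟪a, ω⟫ * (μ * a 0)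
        - (⟪a, ω⟫ * (μ * a 0) + ⟪θ, ω⟫ * (μ * b 0))) = 0 := by
      rcases div_eq_zero_iff.mp hzero2 with h7 | h7
      · have h8 : (⟪b, ω⟫ * (μ * θ 0 + 1) + ⟪a, ω⟫ * (μ * a 0)
            - (⟪a, ω⟫ * (μ * a 0) + ⟪θ, ω⟫ * (μ * b 0))) * (μ * θ 0 + 1) ^ 2 = 0 := by
          linear_combination h7 + (2 * (μ * θ 0 + 1) ^ 1 * (μ * a 0)) * hN0
        rcases mul_eq_zero.mp h8 with h9 | h9
        · exact h9
        · exact absurd h9 (pow_ne_zero _ hne)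
      · exact absurd h7 (pow_ne_zero _ (pow_ne_zero _ hne))
    -- combine h6 with hbω
    have h10 : ⟪θ, ω⟫ * ⟪a, a⟫ = 0 := by
      linear_combination hbω - h6
    rcases mul_eq_zero.mp h10 with h11 | h11
    · exact absurd h11 hg0ne
    · exact h11
  have ha0' : a = 0 := by
    exact inner_self_eq_zero.mp haa
  apply hinj
  rw [map_zero, ← hadef]
  exact ha0'
end

section
/- Fix ω ∈ 𝕊² and 0 ≤ μ < 1. The critical points on 𝕊² of f_ω(θ) = ⟨θ,ω⟩/(μθ₁+1) satisfy ⟨θ, ω⟩ ≠ 0 and lie in span{e₁, ω} ∩ 𝕊². In particular, if ω = e₁ the critical points are exactly {e₁, -e₁}. -/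
open scoped RealInnerProductSpace

/-- Characterization of the critical points of `f_ω(θ) = ⟨θ,ω⟩/(μθ₁+1)` on `𝕊²`: a critical
point (i.e. a solution of `(μθ₁+1)ω - μ⟨θ,ω⟩e₁ = ⟨θ,ω⟩θ`) satisfies `⟨θ,ω⟩ ≠ 0` and lies in
`span{e₁, ω}`; if `ω = e₁` the critical points are exactly `{e₁, -e₁}`. -/
theorem stmt_10 (μ : ℝ) (hμ0 : 0 ≤ μ) (hμ1 : μ < 1)
    (ω θ : EuclideanSpace ℝ (Fin 3)) (hω : ‖ω‖ = 1) (hθ : ‖θ‖ = 1) :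
    (((μ * θ 0 + 1) • ω - (μ * ⟪θ, ω⟫) • (EuclideanSpace.single (0 : Fin 3) (1 : ℝ)) =
        ⟪θ, ω⟫ • θ) →
      ⟪θ, ω⟫ ≠ 0 ∧
        θ ∈ Submodule.span ℝ {EuclideanSpace.single (0 : Fin 3) (1 : ℝ), ω}) ∧
    (ω = EuclideanSpace.single (0 : Fin 3) (1 : ℝ) →
      (((μ * θ 0 + 1) • ω - (μ * ⟪θ, ω⟫) • (EuclideanSpace.single (0 : Fin 3) (1 : ℝ)) =
          ⟪θ, ω⟫ • θ) ↔
        (θ = EuclideanSpace.single (0 : Fin 3) (1 : ℝ) ∨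
          θ = -EuclideanSpace.single (0 : Fin 3) (1 : ℝ)))) := by
  have hθ0 : |θ 0| ≤ 1 := by
    have h1 : θ 0 = ⟪θ, EuclideanSpace.single (0 : Fin 3) (1 : ℝ)⟫ := by
      simp [EuclideanSpace.inner_single_right]
    have h2 := abs_real_inner_le_norm θ (EuclideanSpace.single (0 : Fin 3) (1 : ℝ))
    rw [hθ, EuclideanSpace.norm_single, norm_one, mul_one, ← h1] at h2
    exact h2
  have hpos : 0 < μ * θ 0 + 1 := by
    rcases abs_le.mp hθ0 with ⟨h1, h2⟩
    nlinarith
  constructor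
  · intro h
    have hne : ⟪θ, ω⟫ ≠ 0 := by
      intro h0
      rw [h0] at h
      simp only [mul_zero, zero_smul, sub_zero] at h
      have hω0 : ω ≠ 0 := by
        intro hz; rw [hz, norm_zero] at hω; norm_num at hω
      rcases smul_eq_zero.mp h with h' | h'
      · exact absurd h' (ne_of_gt hpos)
      · exact hω0 h'
    refine ⟨hne, Submodule.mem_span_pair.mpr ⟨-μ, (μ * θ 0 + 1) / ⟪θ, ω⟫, ?_⟩⟩
    refine smul_right_injective (EuclideanSpace ℝ (Fin 3)) hne ?_
    dsimp only
    rw [smul_add, smul_smul, smul_smul, mul_div_cancel₀ _ hne, ← h]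
    module
  · intro hω1
    subst hω1
    have hiθ : ⟪θ, EuclideanSpace.single (0 : Fin 3) (1 : ℝ)⟫ = θ 0 := by
      simp [EuclideanSpace.inner_single_right]
    rw [hiθ]
    constructor
    · intro h
      have key : EuclideanSpace.single (0 : Fin 3) (1 : ℝ) = θ 0 • θ := by
        have : (μ * θ 0 + 1) • EuclideanSpace.single (0 : Fin 3) (1 : ℝ)
            - (μ * θ 0) • EuclideanSpace.single (0 : Fin 3) (1 : ℝ)
            = (1 : ℝ) • EuclideanSpace.single (0 : Fin 3) (1 : ℝ) := by module
        rw [this, one_smul] at h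
        exact h
      have hn : |θ 0| = 1 := by
        have := congrArg norm key
        rw [EuclideanSpace.norm_single, norm_one, norm_smul, hθ, mul_one] at this
        exact this.symm
      rcases abs_eq (by norm_num : (0:ℝ) ≤ 1) |>.mp hn with h1 | h1
      · left; rw [h1, one_smul] at key; exact key.symm
      · right
        rw [h1] at key
        rw [key]
        module
    · rintro (rfl | rfl) <;>
        simp [EuclideanSpace.single_apply] <;> module
end
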